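/- arXiv:1911.05576 — 8 statements merged into one kernel-verified Lean document; each statement's English description precedes it below -/
import Mathlib

section
/- Let R have density f(r) = 2r·1_{[0,1]}(r) and S have density h(t) = (1/(π√(1−t²)))·1_{|t|<1}, with R and S independent. Then the product η = R·S has density f_η(t) = (2/π)√(1−t²)·1_{|t|<1} (the semicircle law). -/
/-!
The law of `R * S` is the multiplicative convolution of the laws of `R` and `S`. For laws with
densities `f`, `g` on `ℝ`, the substitution `y = t / u` in the inner integral shows that this
convolution has density `t ↦ ∫ f(u) g(t/u) |u|⁻¹ du`. For `f(u) = 2u` on `[0, 1]` this is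
`∫_{(0,1]} 2 g(t/u) du`, and for the arcsine density `g` and `0 < u` one has
`2 g(t/u) = (2/π) u / √(u² - t²)` when `|t| < u` and `0` otherwise. So the density at `|t| < 1`
is `∫_{|t|}^1 (2/π) u / √(u² - t²) du = (2/π) √(1 - t²)`, the antiderivative being
`(2/π) √(u² - t²)`.
-/

open MeasureTheory Real
open scoped ENNReal

theorem lintegral_comp_mul_left_of_ne_zero {a : ℝ} (ha : a ≠ 0) {φ : ℝ → ℝ≥0∞}
    (hφ : Measurable φ) : ∫⁻ y, φ (a * y) = ENNReal.ofReal |a|⁻¹ * ∫⁻ t, φ t := by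
  rw [← lintegral_map hφ (measurable_const_mul a), Real.map_volume_mul_left ha,
    lintegral_smul_measure, abs_inv, smul_eq_mul]

theorem Real.mconv_withDensity {f g : ℝ → ℝ≥0∞} (hf : Measurable f) (hg : Measurable g) :
    volume.withDensity f ∗ₘ volume.withDensity g =
      volume.withDensity (fun t => ∫⁻ u, f u * g (t / u) * ENNReal.ofReal |u|⁻¹) := by
  have hkernel : Measurable fun p : ℝ × ℝ => f p.1 * g (p.2 / p.1) * ENNReal.ofReal |p.1|⁻¹ := by
    fun_prop
  refine Measure.ext_of_lintegral _ fun φ hφ => ?_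
  have inner : ∀ᵐ u : ℝ, f u * ∫⁻ y, g y * φ (u * y) =
      ∫⁻ t, f u * g (t / u) * ENNReal.ofReal |u|⁻¹ * φ t := by
    filter_upwards [volume.ae_ne 0] with u hu
    have hcancel : (fun y => g y * φ (u * y)) = fun y => (fun s => g (s / u) * φ s) (u * y) := by
      simp only [mul_div_cancel_left₀ _ hu]
    rw [hcancel,
      lintegral_comp_mul_left_of_ne_zero (φ := fun s => g (s / u) * φ s) hu (by fun_prop),
      ← mul_assoc, ← lintegral_const_mul _ (by fun_prop)]
    congr 1 with t
    ring
  calc ∫⁻ t, φ t ∂(volume.withDensity f ∗ₘ volume.withDensity g)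
      = ∫⁻ u, f u * ∫⁻ y, g y * φ (u * y) := by
        rw [Measure.lintegral_mconv hφ, lintegral_withDensity_eq_lintegral_mul _ hf (by fun_prop)]
        congr 1 with u
        rw [Pi.mul_apply, lintegral_withDensity_eq_lintegral_mul _ hg (by fun_prop)]
        rfl
    _ = ∫⁻ u, ∫⁻ t, f u * g (t / u) * ENNReal.ofReal |u|⁻¹ * φ t := lintegral_congr_ae inner
    _ = ∫⁻ t, (∫⁻ u, f u * g (t / u) * ENNReal.ofReal |u|⁻¹) * φ t := by
        rw [lintegral_lintegral_swap (hkernel.mul (hφ.comp measurable_snd)).aemeasurable]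
        congr 1 with t
        rw [lintegral_mul_const _ (by fun_prop)]
    _ = _ := (lintegral_withDensity_eq_lintegral_mul _ hkernel.lintegral_prod_left' hφ).symm

theorem withDensity_ne_zero_of_ne_zero_on {α : Type*} [MeasurableSpace α] {μ : Measure α}
    {f : α → ℝ≥0∞} (hf : AEMeasurable f μ) {s : Set α} (hs : μ s ≠ 0)
    (hfs : ∀ x ∈ s, f x ≠ 0) : μ.withDensity f ≠ 0 := by
  intro h
  have h0 : μ.withDensity f s = 0 := by rw [h, Measure.coe_zero, Pi.zero_apply]
  rw [withDensity_apply_eq_zero' hf,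
    Set.inter_eq_right.mpr (show s ⊆ {x | f x ≠ 0} from hfs)] at h0
  exact hs h0

theorem lintegral_Ioc_ofReal_eq_sub_of_hasDerivAt {F F' : ℝ → ℝ} {a b : ℝ} (hab : a ≤ b)
    (hF : ContinuousOn F (Set.Icc a b)) (hderiv : ∀ x ∈ Set.Ioo a b, HasDerivAt F (F' x) x)
    (hpos : ∀ x ∈ Set.Ioo a b, 0 ≤ F' x) :
    ∫⁻ x in Set.Ioc a b, ENNReal.ofReal (F' x) = ENNReal.ofReal (F b - F a) := by
  have hint : IntegrableOn F' (Set.Ioc a b) :=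
    intervalIntegral.integrableOn_deriv_of_nonneg hF hderiv hpos
  have hFTC := intervalIntegral.integral_eq_sub_of_hasDerivAt_of_le hab hF hderiv
    ((intervalIntegrable_iff_integrableOn_Ioc_of_le hab).mpr hint)
  rw [intervalIntegral.integral_of_le hab] at hFTC
  have hnonneg : 0 ≤ᵐ[volume.restrict (Set.Ioc a b)] F' := by
    rw [← restrict_Ioo_eq_restrict_Ioc]
    exact ae_restrict_of_forall_mem measurableSet_Ioo hpos
  rw [← hFTC, ofReal_integral_eq_lintegral_ofReal hint hnonneg]

-- the law of the distance to the origin of a uniform point of the unit disc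
noncomputable def radialDensity (r : ℝ) : ℝ≥0∞ :=
  ENNReal.ofReal (if r ∈ Set.Icc (0 : ℝ) 1 then 2 * r else 0)

noncomputable def arcsineDensity (t : ℝ) : ℝ≥0∞ :=
  ENNReal.ofReal (if |t| < 1 then 1 / (π * Real.sqrt (1 - t ^ 2)) else 0)

noncomputable def semicircleDensity (t : ℝ) : ℝ≥0∞ :=
  ENNReal.ofReal (if |t| < 1 then (2 / π) * Real.sqrt (1 - t ^ 2) else 0)

theorem measurable_radialDensity : Measurable radialDensity :=
  (Measurable.ite measurableSet_Icc (by fun_prop) measurable_const).ennreal_ofReal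

theorem measurable_arcsineDensity : Measurable arcsineDensity :=
  (Measurable.ite (measurableSet_lt (by fun_prop) measurable_const) (by fun_prop)
    measurable_const).ennreal_ofReal

theorem withDensity_radialDensity_ne_zero : volume.withDensity radialDensity ≠ 0 := by
  refine withDensity_ne_zero_of_ne_zero_on measurable_radialDensity.aemeasurable
    (s := Set.Ioo 0 1) (by simp) fun r hr => ?_
  rw [radialDensity, if_pos (Set.Ioo_subset_Icc_self hr)]
  simpa using hr.1

theorem withDensity_arcsineDensity_ne_zero : volume.withDensity arcsineDensity ≠ 0 := by
  refine withDensity_ne_zero_of_ne_zero_on measurable_arcsineDensity.aemeasurable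
    (s := Set.Ioo (-1) 1) (by simp) fun t ht => ?_
  have ht' : |t| < 1 := abs_lt.mpr ht
  have hsq : 0 < 1 - t ^ 2 := by nlinarith [sq_abs t, abs_nonneg t]
  rw [arcsineDensity, if_pos ht']
  exact (ENNReal.ofReal_pos.mpr (one_div_pos.mpr (mul_pos pi_pos (sqrt_pos.mpr hsq)))).ne'

theorem radialDensity_mul_ofReal_abs_inv (u : ℝ) :
    radialDensity u * ENNReal.ofReal |u|⁻¹ = (Set.Ioc 0 1).indicator (fun _ => 2) u := by
  by_cases hu : u ∈ Set.Ioc 0 1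
  · rw [Set.indicator_of_mem hu, radialDensity, if_pos (Set.Ioc_subset_Icc_self hu),
      ← ENNReal.ofReal_mul (by linarith [hu.1]), abs_of_pos hu.1, mul_assoc,
      mul_inv_cancel₀ hu.1.ne', mul_one, ENNReal.ofReal_ofNat]
  · rw [Set.indicator_of_notMem hu, radialDensity]
    split_ifs with hIcc
    · have hu0 : u = 0 := by
        by_contra hne
        exact hu ⟨lt_of_le_of_ne hIcc.1 (Ne.symm hne), hIcc.2⟩
      simp [hu0]
    · simp

theorem two_mul_arcsineDensity_div {t u : ℝ} (hu : 0 < u) :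
    2 * arcsineDensity (t / u) = (Set.Ioi |t|).indicator
      (fun x => ENNReal.ofReal (2 / π * (x / Real.sqrt (x ^ 2 - t ^ 2)))) u := by
  rw [arcsineDensity, abs_div, abs_of_pos hu]
  by_cases htu : |t| < u
  · rw [if_pos ((div_lt_one hu).mpr htu), Set.indicator_of_mem (Set.mem_Ioi.mpr htu)]
    have hsq : 0 < u ^ 2 - t ^ 2 := by nlinarith [sq_abs t, abs_nonneg t]
    have hsqrt : Real.sqrt (1 - (t / u) ^ 2) = Real.sqrt (u ^ 2 - t ^ 2) / u := by
      rw [show 1 - (t / u) ^ 2 = (u ^ 2 - t ^ 2) / u ^ 2 by field_simp,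
        Real.sqrt_div hsq.le, Real.sqrt_sq hu.le]
    have hpos : 0 < Real.sqrt (u ^ 2 - t ^ 2) := sqrt_pos.mpr hsq
    rw [hsqrt, ← ENNReal.ofReal_ofNat 2, ← ENNReal.ofReal_mul zero_le_two]
    congr 1
    field_simp
  · rw [if_neg (mt (div_lt_one hu).mp htu),
      Set.indicator_of_notMem (show u ∉ Set.Ioi |t| from htu), ENNReal.ofReal_zero, mul_zero]

theorem lintegral_Ioc_abs_mul_div_sqrt_sq_sub_sq {t : ℝ} (ht : |t| < 1) :
    ∫⁻ x in Set.Ioc |t| 1, ENNReal.ofReal (2 / π * (x / Real.sqrt (x ^ 2 - t ^ 2)))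
      = ENNReal.ofReal (2 / π * Real.sqrt (1 - t ^ 2)) := by
  have hderiv : ∀ x ∈ Set.Ioo |t| 1, HasDerivAt (fun x => 2 / π * Real.sqrt (x ^ 2 - t ^ 2))
      (2 / π * (x / Real.sqrt (x ^ 2 - t ^ 2))) x := by
    intro x hx
    have hsq : x ^ 2 - t ^ 2 ≠ 0 := by nlinarith [sq_abs t, abs_nonneg t, hx.1]
    refine ((((hasDerivAt_pow 2 x).sub_const (t ^ 2)).sqrt hsq).const_mul (2 / π)).congr_deriv ?_
    field_simp
    norm_num
  rw [lintegral_Ioc_ofReal_eq_sub_of_hasDerivAt ht.le (by fun_prop) hderiv fun x hx => ?_]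
  · simp [sq_abs]
  · have := pi_pos
    have : 0 ≤ x := (abs_nonneg t).trans hx.1.le
    positivity

theorem lintegral_radialDensity_mul_arcsineDensity (t : ℝ) :
    ∫⁻ u, radialDensity u * arcsineDensity (t / u) * ENNReal.ofReal |u|⁻¹
      = semicircleDensity t := by
  calc ∫⁻ u, radialDensity u * arcsineDensity (t / u) * ENNReal.ofReal |u|⁻¹
      = ∫⁻ u in Set.Ioc 0 1, 2 * arcsineDensity (t / u) := by
        rw [← lintegral_indicator measurableSet_Ioc]
        congr 1 with u
        rw [mul_right_comm, radialDensity_mul_ofReal_abs_inv]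
        by_cases hu : u ∈ Set.Ioc 0 1 <;> simp [hu]
    _ = ∫⁻ u in Set.Ioc 0 1, (Set.Ioi |t|).indicator
          (fun x => ENNReal.ofReal (2 / π * (x / Real.sqrt (x ^ 2 - t ^ 2)))) u :=
        setLIntegral_congr_fun measurableSet_Ioc fun u hu => two_mul_arcsineDensity_div hu.1
    _ = ∫⁻ x in Set.Ioc |t| 1, ENNReal.ofReal (2 / π * (x / Real.sqrt (x ^ 2 - t ^ 2))) := by
        rw [lintegral_indicator measurableSet_Ioi, Measure.restrict_restrict measurableSet_Ioi,
          Set.inter_comm, Set.Ioc_inter_Ioi, max_eq_right (abs_nonneg t)]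
    _ = semicircleDensity t := by
        rw [semicircleDensity]
        split_ifs with ht
        · exact lintegral_Ioc_abs_mul_div_sqrt_sq_sub_sq ht
        · rw [Set.Ioc_eq_empty ht, Measure.restrict_empty,
            lintegral_zero_measure, ENNReal.ofReal_zero]

theorem radialDensity_mconv_arcsineDensity :
    volume.withDensity radialDensity ∗ₘ volume.withDensity arcsineDensity
      = volume.withDensity semicircleDensity := by
  rw [Real.mconv_withDensity measurable_radialDensity measurable_arcsineDensity]
  simp_rw [lintegral_radialDensity_mul_arcsineDensity]

/-- If `R` has density `2r 1_{[0,1]}`, `S` has the arcsine density, and `R, S` are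
independent, then `R * S` has the semicircle density `(2/π)√(1-t²) 1_{|t|<1}`. -/
theorem product_semicircle
    {Ω : Type*} [MeasurableSpace Ω] (P : Measure Ω) [IsProbabilityMeasure P]
    (R S : Ω → ℝ) (hRS : ProbabilityTheory.IndepFun R S P)
    (hR : Measure.map R P
      = volume.withDensity (fun r : ℝ => ENNReal.ofReal
          (if r ∈ Set.Icc (0 : ℝ) 1 then 2 * r else 0)))
    (hS : Measure.map S P
      = volume.withDensity (fun t : ℝ => ENNReal.ofReal
          (if |t| < 1 then 1 / (π * Real.sqrt (1 - t ^ 2)) else 0))) :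
    Measure.map (fun ω => R ω * S ω) P
      = volume.withDensity (fun t : ℝ => ENNReal.ofReal
          (if |t| < 1 then (2 / π) * Real.sqrt (1 - t ^ 2) else 0)) := by
  -- `Measure.map` of a function that is not a.e.-measurable is `0`
  have hRm : AEMeasurable R P :=
    .of_map_ne_zero (by rw [hR]; exact withDensity_radialDensity_ne_zero)
  have hSm : AEMeasurable S P :=
    .of_map_ne_zero (by rw [hS]; exact withDensity_arcsineDensity_ne_zero)
  rw [show (fun ω => R ω * S ω) = R * S from rfl, hRS.map_mul_eq_map_mconv_map₀ hRm hSm, hR, hS]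
  exact radialDensity_mconv_arcsineDensity
end

section
/- Fix a point a = (a₁, a₂) in the open unit disc, written as a = (r cos β, r sin β), and θ ∈ (0, π), θ ≠ π/2, with m = tan θ. Let V and W be the two intersection points of the line y = m(x − a₁) + a₂ with the unit circle. Then dist(a,V)² + dist(a,W)² = 2(1 + r² cos(2(θ − β))). -/
open Real

/-- For a point `a = (r cos β, r sin β)` in the open unit disc and a line through `a`
with slope `m = tan θ` (`θ ∈ (0,π)`, `θ ≠ π/2`) meeting the unit circle at the two
points `V ≠ W`, the sum of squared distances from `a` to `V` and `W` equals
`2 (1 + r² cos (2(θ - β)))`. -/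
theorem sum_sq_dist_chord (θ r β : ℝ) (a V W : ℝ × ℝ)
    (hθ : θ ∈ Set.Ioo 0 π) (hθ' : θ ≠ π / 2)
    (ha : a = (r * Real.cos β, r * Real.sin β))
    (haD : a.1 ^ 2 + a.2 ^ 2 < 1)
    (hV : V.1 ^ 2 + V.2 ^ 2 = 1) (hV' : V.2 = Real.tan θ * (V.1 - a.1) + a.2)
    (hW : W.1 ^ 2 + W.2 ^ 2 = 1) (hW' : W.2 = Real.tan θ * (W.1 - a.1) + a.2)
    (hVW : V ≠ W) :
    ((a.1 - V.1) ^ 2 + (a.2 - V.2) ^ 2) + ((a.1 - W.1) ^ 2 + (a.2 - W.2) ^ 2)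
      = 2 * (1 + r ^ 2 * Real.cos (2 * (θ - β))) := by
  obtain ⟨hθ0, hθπ⟩ := hθ
  set s := Real.sin θ with hs
  set c := Real.cos θ with hcdef
  have hc : c ≠ 0 := by
    rcases lt_or_gt_of_ne hθ' with h | h
    · have : 0 < c := Real.cos_pos_of_mem_Ioo ⟨by linarith [Real.pi_pos], h⟩
      linarith
    · have : c < 0 := Real.cos_neg_of_pi_div_two_lt_of_lt h (by linarith [Real.pi_pos])
      linarith
  have hsc : s ^ 2 + c ^ 2 = 1 := Real.sin_sq_add_cos_sq θ
  have hV2 : c * (V.2 - a.2) = s * (V.1 - a.1) := by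
    rw [hV', Real.tan_eq_sin_div_cos, ← hs, ← hcdef]; field_simp; ring
  have hW2 : c * (W.2 - a.2) = s * (W.1 - a.1) := by
    rw [hW', Real.tan_eq_sin_div_cos, ← hs, ← hcdef]; field_simp; ring
  have hqV : V.1 ^ 2 + 2 * s * (c * a.2 - s * a.1) * V.1 +
      ((s * a.1 - c * a.2) ^ 2 - c ^ 2) = 0 := by
    linear_combination c ^ 2 * hV - (c * V.2 + (s * (V.1 - a.1) + c * a.2)) * hV2 -
      V.1 ^ 2 * hsc
  have hqW : W.1 ^ 2 + 2 * s * (c * a.2 - s * a.1) * W.1 +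
      ((s * a.1 - c * a.2) ^ 2 - c ^ 2) = 0 := by
    linear_combination c ^ 2 * hW - (c * W.2 + (s * (W.1 - a.1) + c * a.2)) * hW2 -
      W.1 ^ 2 * hsc
  have hne : V.1 ≠ W.1 := by
    intro h
    exact hVW (Prod.ext h (by rw [hV', hW', h]))
  have hsum : V.1 + W.1 = 2 * s * (s * a.1 - c * a.2) := by
    have key : (V.1 - W.1) * ((V.1 + W.1) - 2 * s * (s * a.1 - c * a.2)) = 0 := by
      linear_combination hqV - hqW
    rcases mul_eq_zero.mp key with h1 | h1
    · exact absurd (sub_eq_zero.mp h1) hne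
    · linarith
  have hmain : c ^ 2 * (((a.1 - V.1) ^ 2 + (a.2 - V.2) ^ 2) +
        ((a.1 - W.1) ^ 2 + (a.2 - W.2) ^ 2)) =
      c ^ 2 * (2 * (1 + ((c ^ 2 - s ^ 2) * (a.1 ^ 2 - a.2 ^ 2) +
        4 * s * c * (a.1 * a.2)))) := by
    linear_combination
      (c * (V.2 - a.2) + s * (V.1 - a.1)) * hV2 +
      (c * (W.2 - a.2) + s * (W.1 - a.1)) * hW2 +
      hqV + hqW +
      (2 * s * (s * a.1 - c * a.2) - 2 * a.1) * hsum +
      ((a.1 - V.1) ^ 2 + (a.1 - W.1) ^ 2 + (4 * s ^ 2 - 2 * c ^ 2 - 2) * a.1 ^ 2 +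
        2 * c ^ 2 * a.2 ^ 2 - 8 * s * c * a.1 * a.2) * hsc
  have hS : ((a.1 - V.1) ^ 2 + (a.2 - V.2) ^ 2) + ((a.1 - W.1) ^ 2 + (a.2 - W.2) ^ 2) =
      2 * (1 + ((c ^ 2 - s ^ 2) * (a.1 ^ 2 - a.2 ^ 2) + 4 * s * c * (a.1 * a.2))) :=
    mul_left_cancel₀ (pow_ne_zero 2 hc) hmain
  have ha1 : a.1 = r * Real.cos β := by rw [ha]
  have ha2 : a.2 = r * Real.sin β := by rw [ha]
  have hcos2 : Real.cos (2 * (θ - β)) =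
      (c ^ 2 - s ^ 2) * (Real.cos β ^ 2 - Real.sin β ^ 2) +
        4 * s * c * (Real.sin β * Real.cos β) := by
    rw [show 2 * (θ - β) = (θ - β) + (θ - β) by ring, Real.cos_add, Real.cos_sub,
      Real.sin_sub]
    ring
  rw [hcos2]
  rw [ha1, ha2] at hS ⊢
  linear_combination hS
end

section
/- Let A be uniformly distributed on the unit disc, B uniform on the disc and independent of A, and let Θ₁ ∈ [0, π) be the angle that the line through A and B makes with the x-axis. Then Θ₁ is uniformly distributed on [0, π). -/
/-!
The difference `B - A` of two independent uniform points of the disc has a rotation-invariant law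
on `ℂ`: the uniform law on the disc is rotation invariant, `-A` is again uniform, and the law of
`B + (-A)` is the convolution of the two. Rotating a nonzero vector by `exp (iα)` adds `α`
to its direction modulo `π`, and `B - A ≠ 0` almost surely, so this direction is distributed by a
translation-invariant probability measure on `ℝ ⧸ πℤ`, i.e. by its normalized Haar measure, whose
representative in `[0, π)` is uniform. Almost surely `Θ₁` is that representative.
-/

open MeasureTheory Real

def unitDisc : Set (ℝ × ℝ) := {x : ℝ × ℝ | x.1 ^ 2 + x.2 ^ 2 ≤ 1}

open ProbabilityTheory
open scoped ENNReal

lemma MeasureTheory.MeasurePreserving.map_cond {α β : Type*} [MeasurableSpace α]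
    [MeasurableSpace β] {μ : Measure α} {ν : Measure β} {f : α → β}
    (hf : MeasurePreserving f μ ν) {s : Set β} (hs : MeasurableSet s) :
    (μ[|f ⁻¹' s]).map f = ν[|s] := by
  rw [ProbabilityTheory.cond, ProbabilityTheory.cond, Measure.map_smul,
    (hf.restrict_preimage hs).map_eq, hf.measure_preimage hs.nullMeasurableSet]

lemma MeasureTheory.pdf.IsUniform.comp_measurePreserving {Ω E F : Type*} [MeasurableSpace Ω]
    [MeasurableSpace E] [MeasurableSpace F] {P : Measure Ω} {μ : Measure E} {ν : Measure F}
    {X : Ω → E} {f : E → F} {t : Set F} (hX : pdf.IsUniform X (f ⁻¹' t) P μ)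
    (hf : MeasurePreserving f μ ν) (ht : MeasurableSet t) (ht₀ : ν t ≠ 0) (ht₁ : ν t ≠ ∞) :
    pdf.IsUniform (f ∘ X) t P ν := by
  have hXm : AEMeasurable X P := by
    refine hX.aemeasurable ?_ ?_ <;> rwa [hf.measure_preimage ht.nullMeasurableSet]
  rw [pdf.IsUniform, ← hf.measurable.aemeasurable.map_map_of_aemeasurable hXm, hX,
    hf.map_cond ht]

lemma ProbabilityTheory.IndepFun.map_sub_eq_conv_map_neg {Ω E : Type*} [MeasurableSpace Ω]
    {P : Measure Ω} [IsFiniteMeasure P] [AddCommGroup E] [MeasurableSpace E] [MeasurableAdd₂ E]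
    [MeasurableNeg E] {X Y : Ω → E} (hXY : IndepFun X Y P) (hX : AEMeasurable X P)
    (hY : AEMeasurable Y P) :
    P.map (X - Y) = P.map X ∗ (P.map Y).map Neg.neg := by
  rw [sub_eq_add_neg, (hXY.comp measurable_id measurable_neg).map_add_eq_map_conv_map₀ hX hY.neg,
    AEMeasurable.map_map_of_aemeasurable measurable_neg.aemeasurable hY]
  rfl

namespace AddCircle

variable {T : ℝ} [Fact (0 < T)]

lemma eq_haarAddCircle_of_isAddLeftInvariant (μ : Measure (AddCircle T))
    [IsProbabilityMeasure μ] [μ.IsAddLeftInvariant] : μ = haarAddCircle := by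
  have h := Measure.isAddInvariant_eq_smul_of_compactSpace μ haarAddCircle
  have h1 : Measure.addHaarScalarFactor μ haarAddCircle = 1 := by
    simpa using (congrArg (fun m : Measure (AddCircle T) => m Set.univ) h).symm
  rw [h, h1, one_smul]

lemma measurable_coe_equivIco (a : ℝ) :
    Measurable fun x : AddCircle T => (equivIco T a x : ℝ) :=
  measurable_subtype_coe.comp (measurableEquivIco T a).measurable

lemma map_coe_equivIco_haarAddCircle (a : ℝ) :
    (haarAddCircle : Measure (AddCircle T)).map (fun x => (equivIco T a x : ℝ))
      = volume[|Set.Ico a (a + T)] := by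
  have hhaar : (haarAddCircle : Measure (AddCircle T)) = (ENNReal.ofReal T)⁻¹ • volume := by
    rw [volume_eq_smul_haarAddCircle, smul_smul, ENNReal.inv_mul_cancel
      (by simpa using (Fact.out : 0 < T)) ENNReal.ofReal_ne_top, one_smul]
  have hvol : (volume : Measure (AddCircle T))
      = (volume.restrict (Set.Ico a (a + T))).map ((↑) : ℝ → AddCircle T) := by
    rw [Measure.restrict_congr_set Ico_ae_eq_Ioc, (AddCircle.measurePreserving_mk T a).map_eq]
  have hrep : (volume.restrict (Set.Ico a (a + T))).map
        (fun x : ℝ => (equivIco T a (x : AddCircle T) : ℝ))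
      = volume.restrict (Set.Ico a (a + T)) := by
    rw [Measure.map_congr (g := id), Measure.map_id]
    filter_upwards [ae_restrict_mem measurableSet_Ico] with x hx
    simp [equivIco_coe_eq hx]
  rw [hhaar, hvol, Measure.map_smul,
    Measure.map_map (measurable_coe_equivIco a) AddCircle.measurable_mk', Function.comp_def, hrep,
    ProbabilityTheory.cond, Real.volume_Ico, add_sub_cancel_left]

lemma map_eq_cond_Ico_of_ae_eq_equivIco {Ω : Type*} [MeasurableSpace Ω] {P : Measure Ω}
    {g : Ω → AddCircle T} {Θ : Ω → ℝ} {a : ℝ} (hg : P.map g = haarAddCircle)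
    (hΘ : Θ =ᵐ[P] fun ω => (equivIco T a (g ω) : ℝ)) :
    P.map Θ = volume[|Set.Ico a (a + T)] := by
  rw [Measure.map_congr hΘ, ← Function.comp_def (fun x => (equivIco T a x : ℝ)),
    ← (measurable_coe_equivIco a).aemeasurable.map_map_of_aemeasurable
      (.of_map_ne_zero (hg ▸ IsProbabilityMeasure.ne_zero _)),
    hg, map_coe_equivIco_haarAddCircle]

end AddCircle

instance fact_pi_pos : Fact (0 < π) := ⟨pi_pos⟩

/-- The direction of the line `ℝ z`, as an angle modulo `π` (with junk value `0` at `z = 0`). -/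
noncomputable def lineAngle (z : ℂ) : AddCircle π := (z.arg : AddCircle π)

lemma measurable_lineAngle : Measurable lineAngle :=
  AddCircle.measurable_mk'.comp Complex.measurable_arg

lemma sin_mul_re_eq_cos_mul_im_iff {z : ℂ} (hz : z ≠ 0) (θ : ℝ) :
    sin θ * z.re = cos θ * z.im ↔ (θ : AddCircle π) = lineAngle z := by
  have hcross : sin θ * z.re - cos θ * z.im = ‖z‖ * sin (θ - z.arg) := by
    rw [← Complex.norm_mul_cos_arg, ← Complex.norm_mul_sin_arg, sin_sub]
    ring
  rw [lineAngle, ← sub_eq_zero, hcross, mul_eq_zero, or_iff_right (norm_ne_zero_iff.mpr hz),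
    sin_eq_zero_iff, ← sub_eq_zero, ← AddCircle.coe_sub, AddCircle.coe_eq_zero_iff]
  simp [zsmul_eq_mul]

lemma lineAngle_circleExp_mul (α : ℝ) {z : ℂ} (hz : z ≠ 0) :
    lineAngle (Circle.exp α * z) = α + lineAngle z := by
  have hw : (Circle.exp α : ℂ) * z ≠ 0 := mul_ne_zero (Circle.coe_ne_zero _) hz
  rw [show (α : AddCircle π) + lineAngle z = ((α + z.arg : ℝ) : AddCircle π) from
    (AddCircle.coe_add (p := π) _ _).symm, eq_comm, ← sin_mul_re_eq_cos_mul_im_iff hw]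
  simp only [Circle.coe_exp, Complex.mul_re, Complex.mul_im, Complex.exp_ofReal_mul_I_re,
    Complex.exp_ofReal_mul_I_im, ← Complex.norm_mul_cos_arg z, ← Complex.norm_mul_sin_arg z,
    sin_add, cos_add]
  ring

def IsRotationInvariant (μ : Measure ℂ) : Prop :=
  ∀ c : Circle, μ.map (rotation c) = μ

lemma isRotationInvariant_cond_closedBall (r : ℝ) :
    IsRotationInvariant (volume[|Metric.closedBall (0 : ℂ) r]) := fun c => by
  have h : rotation c ⁻¹' Metric.closedBall 0 r = Metric.closedBall 0 r := by
    rw [LinearIsometryEquiv.preimage_closedBall, map_zero]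
  conv_lhs => rw [← h]
  exact (rotation c).measurePreserving.map_cond Metric.isClosed_closedBall.measurableSet

namespace IsRotationInvariant

variable {μ ν : Measure ℂ}

lemma map_neg (hμ : IsRotationInvariant μ) : μ.map Neg.neg = μ := by
  have h : ⇑(rotation (-1)) = Neg.neg := funext fun z => by simp [rotation_apply]
  rw [← h, hμ]

lemma conv [SFinite μ] [SFinite ν] (hμ : IsRotationInvariant μ) (hν : IsRotationInvariant ν) :
    IsRotationInvariant (μ ∗ ν) := fun c => by
  simpa [hμ c, hν c] using Measure.map_conv_continuousLinearMap (μ := μ) (ν := ν)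
    (rotation c).toContinuousLinearEquiv.toContinuousLinearMap

lemma map_lineAngle [IsProbabilityMeasure μ] (hμ : IsRotationInvariant μ) (h0 : μ {0} = 0) :
    μ.map lineAngle = AddCircle.haarAddCircle := by
  have hne : ∀ᵐ z ∂μ, z ≠ 0 := measure_eq_zero_iff_ae_notMem.1 h0
  have : IsProbabilityMeasure (μ.map lineAngle) :=
    Measure.isProbabilityMeasure_map measurable_lineAngle.aemeasurable
  have : (μ.map lineAngle).IsAddLeftInvariant := ⟨fun a => by
    obtain ⟨α, rfl⟩ := QuotientAddGroup.mk_surjective a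
    calc (μ.map lineAngle).map ((α : AddCircle π) + ·)
        = μ.map (((α : AddCircle π) + ·) ∘ lineAngle) :=
          Measure.map_map (measurable_const_add _) measurable_lineAngle
      _ = μ.map (lineAngle ∘ rotation (Circle.exp α)) := Measure.map_congr <| by
          filter_upwards [hne] with z hz
          exact (lineAngle_circleExp_mul α hz).symm
      _ = (μ.map (rotation (Circle.exp α))).map lineAngle :=
          (Measure.map_map measurable_lineAngle (rotation _).continuous.measurable).symm
      _ = μ.map lineAngle := by rw [hμ]⟩
  exact AddCircle.eq_haarAddCircle_of_isAddLeftInvariant _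

end IsRotationInvariant

lemma map_lineAngle_sub_eq_haarAddCircle {Ω : Type*} [MeasurableSpace Ω] {P : Measure Ω}
    [IsProbabilityMeasure P] {X Y : Ω → ℂ} (hXY : IndepFun X Y P) (hX : AEMeasurable X P)
    (hY : AEMeasurable Y P) (hμX : IsRotationInvariant (P.map X))
    (hμY : IsRotationInvariant (P.map Y)) (hne : ∀ᵐ ω ∂P, X ω ≠ Y ω) :
    P.map (fun ω => lineAngle (X ω - Y ω)) = AddCircle.haarAddCircle := by
  have hlaw : P.map (X - Y) = P.map X ∗ P.map Y := by
    rw [hXY.map_sub_eq_conv_map_neg hX hY, hμY.map_neg]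
  have : IsProbabilityMeasure (P.map (X - Y)) := Measure.isProbabilityMeasure_map (hX.sub hY)
  have h0 : P.map (X - Y) {0} = 0 := by
    rw [Measure.map_apply_of_aemeasurable (hX.sub hY) (measurableSet_singleton 0)]
    refine measure_eq_zero_iff_ae_notMem.2 ?_
    filter_upwards [hne] with ω hω
    simpa [sub_eq_zero] using hω
  change P.map (lineAngle ∘ (X - Y)) = _
  rw [← measurable_lineAngle.aemeasurable.map_map_of_aemeasurable (hX.sub hY)]
  exact (hlaw ▸ hμX.conv hμY).map_lineAngle h0

lemma measurableEquivRealProd_symm_preimage_closedBall :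
    Complex.measurableEquivRealProd.symm ⁻¹' Metric.closedBall 0 1 = unitDisc := by
  ext p
  rw [Set.mem_preimage, Metric.mem_closedBall, dist_zero_right,
    ← pow_le_one_iff_of_nonneg (norm_nonneg _) two_ne_zero, Complex.sq_norm,
    Complex.measurableEquivRealProd_symm_apply, Complex.normSq_mk, unitDisc, Set.mem_ofPred_eq,
    sq, sq]

lemma isUniform_closedBall_of_isUniform_unitDisc {Ω : Type*} [MeasurableSpace Ω]
    {P : Measure Ω} {X : Ω → ℝ × ℝ} (hX : pdf.IsUniform X unitDisc P) :
    pdf.IsUniform (Complex.measurableEquivRealProd.symm ∘ X) (Metric.closedBall 0 1) P := by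
  refine pdf.IsUniform.comp_measurePreserving ?_
    (Complex.volume_preserving_equiv_real_prod.symm _) measurableSet_closedBall
    (Metric.measure_closedBall_pos volume 0 one_pos).ne' measure_closedBall_lt_top.ne
  rwa [measurableEquivRealProd_symm_preimage_closedBall]

theorem angle_uniform_general
    {Ω : Type*} [MeasurableSpace Ω] (P : Measure Ω) [IsProbabilityMeasure P]
    (A B : Ω → ℝ × ℝ) (Θ₁ : Ω → ℝ)
    (hA : Measure.map A P = (volume unitDisc)⁻¹ • volume.restrict unitDisc)
    (hB : Measure.map B P = (volume unitDisc)⁻¹ • volume.restrict unitDisc)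
    (hAB : ProbabilityTheory.IndepFun A B P)
    (hΘ : ∀ᵐ ω ∂P, A ω ≠ B ω ∧ Θ₁ ω ∈ Set.Ico 0 π ∧
      Real.sin (Θ₁ ω) * ((B ω).1 - (A ω).1)
        = Real.cos (Θ₁ ω) * ((B ω).2 - (A ω).2)) :
    Measure.map Θ₁ P = (ENNReal.ofReal π)⁻¹ • volume.restrict (Set.Ico (0 : ℝ) π) := by
  set e := Complex.measurableEquivRealProd.symm
  have hD₀ : volume (Metric.closedBall (0 : ℂ) 1) ≠ 0 :=
    (Metric.measure_closedBall_pos volume 0 one_pos).ne'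
  have hD₁ : volume (Metric.closedBall (0 : ℂ) 1) ≠ ∞ := measure_closedBall_lt_top.ne
  have hZ := isUniform_closedBall_of_isUniform_unitDisc hA
  have hW := isUniform_closedBall_of_isUniform_unitDisc hB
  have hlaw : P.map (fun ω => lineAngle (e (B ω) - e (A ω))) = AddCircle.haarAddCircle :=
    map_lineAngle_sub_eq_haarAddCircle (hAB.symm.comp e.measurable e.measurable)
      (hW.aemeasurable hD₀ hD₁) (hZ.aemeasurable hD₀ hD₁)
      (hW ▸ isRotationInvariant_cond_closedBall 1) (hZ ▸ isRotationInvariant_cond_closedBall 1)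
      (hΘ.mono fun ω hω => e.injective.ne hω.1.symm)
  have hΘ_eq :
      Θ₁ =ᵐ[P] fun ω => (AddCircle.equivIco π 0 (lineAngle (e (B ω) - e (A ω))) : ℝ) := by
    filter_upwards [hΘ] with ω ⟨hne, hmem, hsin⟩
    rw [← (sin_mul_re_eq_cos_mul_im_iff (sub_ne_zero.2 (e.injective.ne hne.symm)) _).1
      (by simpa [e] using hsin), AddCircle.equivIco_coe_of_mem (by rwa [zero_add])]
  rw [AddCircle.map_eq_cond_Ico_of_ae_eq_equivIco hlaw hΘ_eq, ProbabilityTheory.cond, zero_add,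
    Real.volume_Ico, sub_zero]

/-- If `A` and `B` are independent uniform points in the unit disc and `Θ₁ ∈ [0, π)`
is the angle that the line through `A` and `B` makes with the x-axis (a.s.
characterized by `(B - A)` being parallel to `(cos Θ₁, sin Θ₁)`), then `Θ₁` is
uniform on `[0, π)`. -/
theorem angle_uniform
    {Ω : Type*} [MeasurableSpace Ω] (P : Measure Ω) [IsProbabilityMeasure P]
    (A B : Ω → ℝ × ℝ) (Θ₁ : Ω → ℝ)
    (hA : Measure.map A P = (volume unitDisc)⁻¹ • volume.restrict unitDisc)
    (hB : Measure.map B P = (volume unitDisc)⁻¹ • volume.restrict unitDisc)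
    (hAB : ProbabilityTheory.IndepFun A B P)
    (hΘmeas : Measurable Θ₁)
    (hΘ : ∀ᵐ ω ∂P, A ω ≠ B ω ∧ Θ₁ ω ∈ Set.Ico 0 π ∧
      Real.sin (Θ₁ ω) * ((B ω).1 - (A ω).1)
        = Real.cos (Θ₁ ω) * ((B ω).2 - (A ω).2)) :
    Measure.map Θ₁ P = (ENNReal.ofReal π)⁻¹ • volume.restrict (Set.Ico (0 : ℝ) π) :=
  angle_uniform_general P A B Θ₁ hA hB hAB hΘ
end

section
/- For θ ∈ [0, π/2], the double integral ∫₀^{2π} ∫₀^1 γ · 1_{γ sin²(θ − β) ≤ sin²(θ)} (1/(2π)) dγ dβ equals θ/π + (2 − cos(2θ)) sin(2θ)/(6π). -/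
open Real intervalIntegral

/-! The inner integral is explicit: `∫₀¹ γ 1{γ s ≤ t} dγ` is `1/2` if `s ≤ t` and
`t²/(2s²)` otherwise. With `s = sin²(θ - β)` the resulting function of `β` has period `π`, so
the outer integral is twice an integral over `[-θ, π - θ]`. Since
`sin²θ - sin²u = sin(θ + u) sin(θ - u)`, the integrand is `1/2` on `[-θ, θ]` and
`sin⁴θ / (2 sin⁴u)` on `(θ, π - θ)`, where `-cot u - cot³u / 3` is a primitive of `1 / sin⁴u`. -/

open MeasureTheory Set

noncomputable def clippedMoment (t s : ℝ) : ℝ := if s ≤ t then 1 / 2 else t ^ 2 / (2 * s ^ 2)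

theorem integral_id_mul_ite_le {a : ℝ} (ha : a ∈ Icc 0 1) :
    ∫ γ in (0 : ℝ)..1, γ * (if γ ≤ a then 1 else 0) = a ^ 2 / 2 := by
  have h : (fun γ : ℝ => γ * if γ ≤ a then 1 else 0) = {γ | γ ≤ a}.indicator fun γ => γ := by
    ext γ
    by_cases hγ : γ ≤ a <;> simp [hγ]
  rw [h, integral_indicator ha, integral_id]
  ring

theorem integral_id_mul_ite_mul_le {s t : ℝ} (hs : 0 ≤ s) (ht : 0 ≤ t) :
    ∫ γ in (0 : ℝ)..1, γ * (if γ * s ≤ t then 1 else 0) = clippedMoment t s := by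
  unfold clippedMoment
  split_ifs with hst
  · rw [integral_congr (g := fun γ => γ), integral_id]
    · norm_num
    intro γ hγ
    rw [uIcc_of_le zero_le_one] at hγ
    simp [show γ * s ≤ t by nlinarith [hγ.1, hγ.2]]
  · have hs' : 0 < s := ht.trans_lt (not_le.1 hst)
    simp_rw [← le_div_iff₀ hs']
    rw [integral_id_mul_ite_le ⟨div_nonneg ht hs, (div_le_one hs').2 (not_le.1 hst).le⟩, div_pow]
    ring

theorem abs_clippedMoment_le {t : ℝ} (ht : 0 ≤ t) (s : ℝ) : |clippedMoment t s| ≤ 1 / 2 := by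
  unfold clippedMoment
  split_ifs with hst
  · norm_num
  · have hs : 0 < s := ht.trans_lt (not_le.1 hst)
    rw [abs_of_nonneg (by positivity), div_le_iff₀ (by positivity)]
    nlinarith [not_le.1 hst]

theorem measurable_clippedMoment (t : ℝ) : Measurable (clippedMoment t) :=
  Measurable.ite (measurableSet_le measurable_id measurable_const) measurable_const (by fun_prop)

theorem intervalIntegrable_clippedMoment_comp {t : ℝ} (ht : 0 ≤ t) {f : ℝ → ℝ}
    (hf : Measurable f) (a b : ℝ) :
    IntervalIntegrable (fun x => clippedMoment t (f x)) volume a b :=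
  (intervalIntegrable_const (c := (1 / 2 : ℝ))).mono_fun
    ((measurable_clippedMoment t).comp hf).aestronglyMeasurable
    (ae_of_all _ fun x => by simpa using abs_clippedMoment_le ht (f x))

theorem periodic_comp_sin_sq (g : ℝ → ℝ) : Function.Periodic (fun u => g (sin u ^ 2)) π :=
  fun u => by simp [sin_add_pi]

theorem Function.Periodic.integral_comp_sub_left_eq_mul {f : ℝ → ℝ} {T : ℝ}
    (hf : Function.Periodic f T) (hint : ∀ a b, IntervalIntegrable f volume a b) (n : ℤ)
    (c s : ℝ) : ∫ x in (0 : ℝ)..n * T, f (c - x) = n * ∫ x in s..s + T, f x := by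
  have h := hf.intervalIntegral_add_zsmul_eq n (c - n * T) hint
  rw [zsmul_eq_mul, sub_add_cancel] at h
  rw [integral_comp_sub_left, sub_zero, h, hf.intervalIntegral_add_eq _ s, zsmul_eq_mul]

theorem sin_sq_sub_sin_sq (x y : ℝ) : sin x ^ 2 - sin y ^ 2 = sin (x + y) * sin (x - y) := by
  rw [sin_add, sin_sub]
  linear_combination sin y ^ 2 * sin_sq_add_cos_sq x - sin x ^ 2 * sin_sq_add_cos_sq y

theorem sin_sq_le_sin_sq_of_abs_le {θ u : ℝ} (hθ : θ ≤ π / 2) (hu : |u| ≤ θ) :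
    sin u ^ 2 ≤ sin θ ^ 2 := by
  obtain ⟨hu₁, hu₂⟩ := abs_le.1 hu
  rw [← sub_nonneg, sin_sq_sub_sin_sq]
  exact mul_nonneg (sin_nonneg_of_nonneg_of_le_pi (by linarith) (by linarith))
    (sin_nonneg_of_nonneg_of_le_pi (by linarith) (by linarith))

theorem sin_sq_lt_sin_sq_of_mem_Ioo {θ u : ℝ} (hθ : 0 ≤ θ) (hu : u ∈ Ioo θ (π - θ)) :
    sin θ ^ 2 < sin u ^ 2 := by
  obtain ⟨hu₁, hu₂⟩ := hu
  rw [← sub_pos, sin_sq_sub_sin_sq]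
  exact mul_pos (sin_pos_of_pos_of_lt_pi (by linarith) (by linarith))
    (sin_pos_of_pos_of_lt_pi (by linarith) (by linarith))

theorem Real.hasDerivAt_cot {x : ℝ} (hx : sin x ≠ 0) : HasDerivAt cot (-(sin x ^ 2)⁻¹) x := by
  have h := (hasDerivAt_cos x).div (hasDerivAt_sin x) hx
  rw [show cos / sin = cot from funext fun y => (cot_eq_cos_div_sin y).symm] at h
  refine h.congr_deriv ?_
  field_simp
  linear_combination -sin_sq_add_cos_sq x

theorem integral_inv_sin_pow_four {a b : ℝ} (h : ∀ x ∈ uIcc a b, sin x ≠ 0) :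
    ∫ x in a..b, (sin x ^ 4)⁻¹ = (-cot b - cot b ^ 3 / 3) - (-cot a - cot a ^ 3 / 3) := by
  refine integral_eq_sub_of_hasDerivAt (f := fun x => -cot x - cot x ^ 3 / 3) (fun x hx => ?_)
    (ContinuousOn.intervalIntegrable (ContinuousOn.inv₀ (by fun_prop) fun x hx => by
      simpa using h x hx))
  have hx' := h x hx
  have hcot := hasDerivAt_cot hx'
  refine (hcot.fun_neg.fun_sub ((hcot.fun_pow 3).div_const 3)).congr_deriv ?_
  rw [cot_eq_cos_div_sin]
  norm_num
  field_simp
  linear_combination sin_sq_add_cos_sq x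

theorem integral_clippedMoment_sin_sq {θ : ℝ} (hθ : θ ∈ Icc 0 (π / 2)) :
    ∫ u in -θ..π - θ, clippedMoment (sin θ ^ 2) (sin u ^ 2)
      = θ + sin θ ^ 3 * cos θ + sin θ * cos θ ^ 3 / 3 := by
  obtain ⟨hθ₀, hθ₁⟩ := hθ
  have hint := intervalIntegrable_clippedMoment_comp (sq_nonneg (sin θ))
    (by fun_prop : Measurable fun u => sin u ^ 2)
  have hcentral : ∫ u in -θ..θ, clippedMoment (sin θ ^ 2) (sin u ^ 2) = θ := by
    rw [integral_congr (g := fun _ => 1 / 2), intervalIntegral.integral_const, smul_eq_mul]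
    · ring
    intro u hu
    rw [uIcc_of_le (by linarith)] at hu
    exact if_pos (sin_sq_le_sin_sq_of_abs_le hθ₁ (abs_le.2 hu))
  have hflank : ∫ u in θ..π - θ, clippedMoment (sin θ ^ 2) (sin u ^ 2)
      = sin θ ^ 3 * cos θ + sin θ * cos θ ^ 3 / 3 := by
    rw [integral_congr_Ioo_of_le (by linarith) (g := fun u => sin θ ^ 4 / 2 * (sin u ^ 4)⁻¹),
      intervalIntegral.integral_const_mul]
    · rcases hθ₀.eq_or_lt with rfl | hθ_pos
      · simp
      have hsin : ∀ x ∈ uIcc θ (π - θ), sin x ≠ 0 := fun x hx => by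
        rw [uIcc_of_le (by linarith)] at hx
        exact (sin_pos_of_pos_of_lt_pi (by linarith [hx.1]) (by linarith [hx.2])).ne'
      have hsθ : sin θ ≠ 0 := hsin θ left_mem_uIcc
      rw [integral_inv_sin_pow_four hsin, cot_eq_cos_div_sin, cot_eq_cos_div_sin, cos_pi_sub,
        sin_pi_sub]
      field_simp
      ring
    · intro u hu
      simp only [clippedMoment, if_neg (sin_sq_lt_sin_sq_of_mem_Ioo hθ₀ hu).not_ge]
      ring
  rw [← integral_add_adjacent_intervals (hint (-θ) θ) (hint θ (π - θ)), hcentral, hflank]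
  ring

/-- For `θ ∈ [0, π/2]`,
`∫₀^{2π} ∫₀^1 γ 1_{γ sin²(θ-β) ≤ sin²θ} (1/(2π)) dγ dβ = θ/π + (2 - cos 2θ) sin 2θ / (6π)`. -/
theorem double_integral_indicator_first (θ : ℝ) (hθ : θ ∈ Set.Icc 0 (π / 2)) :
    ∫ β in (0 : ℝ)..(2 * π), ∫ γ in (0 : ℝ)..1,
      γ * (if γ * Real.sin (θ - β) ^ 2 ≤ Real.sin θ ^ 2 then (1 : ℝ) else 0) * (1 / (2 * π))
      = θ / π + (2 - Real.cos (2 * θ)) * Real.sin (2 * θ) / (6 * π) := by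
  have hperiod := (periodic_comp_sin_sq (clippedMoment (sin θ ^ 2))).integral_comp_sub_left_eq_mul
    (intervalIntegrable_clippedMoment_comp (sq_nonneg _) (by fun_prop)) 2 θ (-θ)
  push_cast at hperiod
  simp only [intervalIntegral.integral_mul_const, integral_id_mul_ite_mul_le, sq_nonneg]
  rw [hperiod, neg_add_eq_sub, integral_clippedMoment_sin_sq hθ, cos_two_mul, sin_two_mul]
  field_simp
  linear_combination 18 * sin θ * cos θ * sin_sq_add_cos_sq θ
end

section
/- For θ ∈ (0, π), ρ ∈ [−π/2, π/2], and η ∈ ℝ, the condition sin²ρ + (cos θ sin ρ + η)²/sin²θ ≤ 1 is equivalent to −sin(θ + ρ) ≤ η ≤ sin(θ − ρ). -/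
open Real

/-- For `θ ∈ (0, π)`, `ρ ∈ [-π/2, π/2]` and `η ∈ ℝ`:
`sin²ρ + (cos θ sin ρ + η)²/sin²θ ≤ 1 ↔ -sin(θ+ρ) ≤ η ≤ sin(θ-ρ)`. -/
theorem in_disc_iff_eta_interval (θ ρ η : ℝ)
    (hθ : θ ∈ Set.Ioo 0 π) (hρ : ρ ∈ Set.Icc (-(π / 2)) (π / 2)) :
    Real.sin ρ ^ 2 + (Real.cos θ * Real.sin ρ + η) ^ 2 / Real.sin θ ^ 2 ≤ 1
      ↔ -Real.sin (θ + ρ) ≤ η ∧ η ≤ Real.sin (θ - ρ) := by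
  have hs : 0 < Real.sin θ := Real.sin_pos_of_pos_of_lt_pi hθ.1 hθ.2
  have hs2 : 0 < Real.sin θ ^ 2 := by positivity
  have hc : 0 ≤ Real.cos ρ := Real.cos_nonneg_of_mem_Icc (by simpa using hρ)
  have hpyth := Real.sin_sq_add_cos_sq ρ
  rw [add_comm, ← le_sub_iff_add_le, div_le_iff₀ hs2, Real.sin_add, Real.sin_sub]
  constructor
  · intro h
    have h' : (Real.cos θ * Real.sin ρ + η) ^ 2 ≤ (Real.sin θ * Real.cos ρ) ^ 2 := by
      nlinarith
    have := abs_le_of_sq_le_sq' h' (by positivity)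
    constructor <;> nlinarith [this.1, this.2]
  · rintro ⟨h1, h2⟩
    nlinarith [sq_nonneg (Real.cos θ * Real.sin ρ + η)]
end

section
/- For every θ ∈ [0, π], ∫_{−π/2}^{π/2} [∫_{−sin(θ+ρ)}^{sin(θ−ρ)} (2/π)√(1 − t²) dt] · (1/2) cos ρ dρ = (8 sin θ)/(3π). -/
open Real intervalIntegral

/-!
With `G` the odd primitive of the semicircle density, the inner integral is
`G (sin (θ - ρ)) + G (sin (θ + ρ))`. As the weight `cos ρ` is even, the outer integral becomes
`∫ G (sin φ) cos (φ - θ) dφ` over `[θ - π/2, θ + π/2]`. Both factors change sign under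
`φ ↦ φ + π`, so the integrand is `π`-periodic and the window may be moved to
`[-π/2, π/2]`, where `G (sin φ) = (φ + sin φ cos φ) / π` and the integral is elementary.
-/

noncomputable def semicirclePrimitive (x : ℝ) : ℝ := (x * √(1 - x ^ 2) + arcsin x) / π

@[fun_prop]
lemma continuous_semicirclePrimitive : Continuous semicirclePrimitive := by
  unfold semicirclePrimitive
  fun_prop

lemma semicirclePrimitive_neg (x : ℝ) : semicirclePrimitive (-x) = -semicirclePrimitive x := by
  simp only [semicirclePrimitive, arcsin_neg, neg_sq]
  ring

lemma hasDerivAt_semicirclePrimitive {x : ℝ} (hx : x ∈ Set.Ioo (-1) 1) :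
    HasDerivAt semicirclePrimitive (2 / π * √(1 - x ^ 2)) x := by
  have hpos : 0 < 1 - x ^ 2 := by nlinarith [hx.1, hx.2]
  have hsqrt : HasDerivAt (fun y => √(1 - y ^ 2)) (-x / √(1 - x ^ 2)) x := by
    convert ((hasDerivAt_pow 2 x).const_sub 1).sqrt hpos.ne' using 1
    field_simp
    push_cast
    ring
  have h := ((hasDerivAt_id x).mul hsqrt).add (hasDerivAt_arcsin hx.1.ne' hx.2.ne) |>.div_const π
  refine h.congr_deriv ?_
  have hs : √(1 - x ^ 2) ^ 2 = 1 - x ^ 2 := sq_sqrt hpos.le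
  have hsqrt_ne : √(1 - x ^ 2) ≠ 0 := (sqrt_pos.2 hpos).ne'
  simp only [id]
  field_simp
  linear_combination -hs

lemma integral_semicircle_density {a b : ℝ} (ha : a ∈ Set.Icc (-1) 1)
    (hb : b ∈ Set.Icc (-1) 1) :
    ∫ t in a..b, 2 / π * √(1 - t ^ 2) = semicirclePrimitive b - semicirclePrimitive a := by
  refine integral_eq_sub_of_hasDeriv_right continuous_semicirclePrimitive.continuousOn
    (fun x hx => (hasDerivAt_semicirclePrimitive ⟨?_, ?_⟩).hasDerivWithinAt)
    (Continuous.intervalIntegrable (by fun_prop) _ _)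
  · exact (le_min ha.1 hb.1).trans_lt hx.1
  · exact hx.2.trans_le (max_le ha.2 hb.2)

lemma semicirclePrimitive_sin {φ : ℝ} (hφ : φ ∈ Set.Icc (-(π / 2)) (π / 2)) :
    semicirclePrimitive (sin φ) = (φ + sin φ * cos φ) / π := by
  rw [semicirclePrimitive, ← cos_sq', sqrt_sq (cos_nonneg_of_mem_Icc hφ), arcsin_sin' hφ]
  ring

lemma periodic_semicirclePrimitive_sin_mul_cos_sub (θ : ℝ) :
    Function.Periodic (fun φ => semicirclePrimitive (sin φ) * cos (φ - θ)) π := by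
  intro φ
  simp only [sin_add_pi, semicirclePrimitive_neg, add_sub_right_comm, cos_add_pi]
  ring

lemma integral_semicirclePrimitive_sin_mul_cos_sub (θ : ℝ) :
    ∫ φ in (-(π / 2))..(π / 2), semicirclePrimitive (sin φ) * cos (φ - θ)
      = 8 * sin θ / (3 * π) := by
  set F : ℝ → ℝ := fun φ => (cos θ * (φ * sin φ + cos φ - cos φ ^ 3 / 3)
    + sin θ * (sin φ - φ * cos φ + sin φ ^ 3 / 3)) / π
  have hF : ∀ φ, HasDerivAt F ((φ + sin φ * cos φ) / π * cos (φ - θ)) φ := by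
    intro φ
    have hs := hasDerivAt_sin φ
    have hc := hasDerivAt_cos φ
    have hid := hasDerivAt_id φ
    refine (((((hid.mul hs).add hc).sub ((hc.pow 3).div_const 3)).const_mul (cos θ)).add
      ((((hs.sub (hid.mul hc)).add ((hs.pow 3).div_const 3))).const_mul (sin θ)) |>.div_const π
      ).congr_deriv ?_
    simp only [id, cos_sub]
    ring
  calc ∫ φ in (-(π / 2))..(π / 2), semicirclePrimitive (sin φ) * cos (φ - θ)
      = ∫ φ in (-(π / 2))..(π / 2), (φ + sin φ * cos φ) / π * cos (φ - θ) := by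
        refine integral_congr fun φ hφ => ?_
        rw [Set.uIcc_of_le (by linarith [pi_pos])] at hφ
        simp only [semicirclePrimitive_sin hφ]
    _ = F (π / 2) - F (-(π / 2)) :=
        integral_eq_sub_of_hasDerivAt (fun φ _ => hF φ)
          (Continuous.intervalIntegrable (by fun_prop) _ _)
    _ = 8 * sin θ / (3 * π) := by
        simp only [F, sin_pi_div_two, cos_pi_div_two, sin_neg, cos_neg]
        field_simp
        ring

theorem first_integral_eval_general (θ : ℝ) :
    ∫ ρ in (-(π / 2))..(π / 2),
      (∫ t in (-Real.sin (θ + ρ))..(Real.sin (θ - ρ)), (2 / π) * Real.sqrt (1 - t ^ 2))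
        * ((1 / 2) * Real.cos ρ)
      = 8 * Real.sin θ / (3 * π) := by
  set g : ℝ → ℝ := fun φ => semicirclePrimitive (sin φ) * cos (φ - θ)
  have inner : ∀ ρ, (∫ t in (-sin (θ + ρ))..(sin (θ - ρ)), 2 / π * √(1 - t ^ 2))
      * (1 / 2 * cos ρ) = (g (θ + -ρ) + g (θ + ρ)) / 2 := by
    intro ρ
    rw [← sin_neg, integral_semicircle_density (sin_mem_Icc _) (sin_mem_Icc _)]
    simp only [g, sin_neg, semicirclePrimitive_neg, add_sub_cancel_left, ← sub_eq_add_neg,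
      sub_sub_cancel_left, cos_neg]
    ring
  calc _ = ∫ ρ in (-(π / 2))..(π / 2), (g (θ + -ρ) + g (θ + ρ)) / 2 :=
        integral_congr fun ρ _ => inner ρ
    _ = ∫ ρ in (-(π / 2))..(π / 2), g (θ + ρ) := by
        rw [integral_div, integral_add (Continuous.intervalIntegrable (by fun_prop) _ _)
          (Continuous.intervalIntegrable (by fun_prop) _ _),
          integral_comp_neg (fun ρ => g (θ + ρ)), neg_neg]
        ring
    _ = ∫ φ in (θ - π / 2)..(θ - π / 2 + π), g φ := by
        rw [integral_comp_add_left g θ]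
        congr 1
        ring
    _ = ∫ φ in (-(π / 2))..(-(π / 2) + π), g φ :=
        (periodic_semicirclePrimitive_sin_mul_cos_sub θ).intervalIntegral_add_eq _ _
    _ = 8 * sin θ / (3 * π) := by
        rw [show -(π / 2) + π = π / 2 by ring]
        exact integral_semicirclePrimitive_sin_mul_cos_sub θ

/-- For `θ ∈ [0, π]`,
`∫_{-π/2}^{π/2} [∫_{-sin(θ+ρ)}^{sin(θ-ρ)} (2/π)√(1-t²) dt] (1/2) cos ρ dρ = 8 sin θ/(3π)`. -/
theorem first_integral_eval (θ : ℝ) (hθ : θ ∈ Set.Icc 0 π) :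
    ∫ ρ in (-(π / 2))..(π / 2),
      (∫ t in (-Real.sin (θ + ρ))..(Real.sin (θ - ρ)), (2 / π) * Real.sqrt (1 - t ^ 2))
        * ((1 / 2) * Real.cos ρ)
      = 8 * Real.sin θ / (3 * π) :=
  first_integral_eval_general θ
end

section
/- For every θ ∈ [0, π], 2∫_{−π/2}^{π/2} [∫_{−sin(θ+ρ)}^{sin(θ−ρ)} (2/π) t² √(1 − t²) dt] · (1/2) cos ρ dρ = (16 sin θ)/(15π). -/
open Real intervalIntegral

/-!
Put `ψ u = ∫₀^{sin u} t² √(1 - t²) dt`. The integrand is even, so the inner integral is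
`(2/π) (ψ(θ + ρ) + ψ(θ - ρ))`, and `ρ ↦ -ρ` shows that both terms contribute equally: the claim
becomes `∫_{-π/2}^{π/2} ψ(θ + ρ) cos ρ dρ = (4/15) sin θ`. The substitution `t = sin v` gives
`ψ u = (u - sin 4u / 4) / 8` for `|u| ≤ π/2`, and `sin u = sin (π - u)` gives
`ψ u = π/8 - (u - sin 4u / 4) / 8` on `[π/2, 3π/2]`. For `θ ∈ [0, π]` the argument `θ + ρ` stays in
`[-π/2, 3π/2]`, so splitting at `θ + ρ = π/2` leaves two elementary integrals.
-/

lemma integral_neg_eq_add_of_even {E : Type*} [NormedAddCommGroup E] [NormedSpace ℝ E]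
    {f : ℝ → E} (hf : ∀ x y, IntervalIntegrable f MeasureTheory.volume x y)
    (heven : Function.Even f) (a b : ℝ) :
    ∫ t in -a..b, f t = (∫ t in 0..a, f t) + ∫ t in 0..b, f t := by
  have hreflect := integral_comp_neg f (a := 0) (b := a)
  simp only [show ∀ x, f (-x) = f x from heven, neg_zero] at hreflect
  rw [← integral_add_adjacent_intervals (hf (-a) 0) (hf 0 b), hreflect]

noncomputable def sinSqCosSqPrimitive (u : ℝ) : ℝ := (u - sin (4 * u) / 4) / 8

lemma hasDerivAt_sinSqCosSqPrimitive (u : ℝ) :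
    HasDerivAt sinSqCosSqPrimitive (sin u ^ 2 * cos u ^ 2) u := by
  have hx := hasDerivAt_id' u
  refine ((hx.sub ((hx.const_mul 4).sin.div_const 4)).div_const 8).congr_deriv ?_
  rw [show 4 * u = 2 * (2 * u) by ring, cos_two_mul, cos_sq', sin_two_mul]
  ring

noncomputable def sinMoment (u : ℝ) : ℝ := ∫ t in 0..sin u, t ^ 2 * √(1 - t ^ 2)

@[fun_prop]
lemma continuous_sinMoment : Continuous sinMoment :=
  (continuous_primitive (fun _ _ => Continuous.intervalIntegrable (by fun_prop) _ _) 0).comp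
    continuous_sin

lemma sinMoment_eq_of_mem_Icc {u : ℝ} (hu : u ∈ Set.Icc (-(π / 2)) (π / 2)) :
    sinMoment u = sinSqCosSqPrimitive u := by
  have hsubst := integral_comp_mul_deriv (a := 0) (b := u) (g := fun t => t ^ 2 * √(1 - t ^ 2))
    (fun x _ => hasDerivAt_sin x) continuous_cos.continuousOn (by fun_prop)
  rw [sin_zero] at hsubst
  calc sinMoment u
      = ∫ v in 0..u, sin v ^ 2 * cos v ^ 2 := by
        rw [sinMoment, ← hsubst]
        refine integral_congr fun v hv => ?_
        have hv' : v ∈ Set.Icc (-(π / 2)) (π / 2) :=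
          Set.uIcc_subset_Icc ⟨by linarith [pi_pos], by linarith [pi_pos]⟩ hu hv
        simp only [Function.comp, ← cos_sq', sqrt_sq (cos_nonneg_of_mem_Icc hv')]
        ring
    _ = sinSqCosSqPrimitive u - sinSqCosSqPrimitive 0 :=
        integral_eq_sub_of_hasDerivAt (fun v _ => hasDerivAt_sinSqCosSqPrimitive v)
          (Continuous.intervalIntegrable (by fun_prop) _ _)
    _ = sinSqCosSqPrimitive u := by simp [sinSqCosSqPrimitive]

lemma sinMoment_eq_of_mem_Icc_pi_div_two {u : ℝ} (hu : u ∈ Set.Icc (π / 2) (3 * π / 2)) :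
    sinMoment u = π / 8 - sinSqCosSqPrimitive u := by
  rw [sinMoment, ← sin_pi_sub, ← sinMoment,
    sinMoment_eq_of_mem_Icc ⟨by linarith [hu.2], by linarith [hu.1]⟩,
    sinSqCosSqPrimitive, sinSqCosSqPrimitive,
    show 4 * (π - u) = (2 : ℕ) * (2 * π) - 4 * u by push_cast; ring, sin_nat_mul_two_pi_sub]
  ring

/-- Obtained from `sin 4u cos (u - θ) = (sin (5u - θ) + sin (3u + θ)) / 2`. -/
noncomputable def correlationPrimitive (θ u : ℝ) : ℝ :=
  (u * sin (u - θ) + cos (u - θ) + cos (5 * u - θ) / 40 + cos (3 * u + θ) / 24) / 8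

lemma hasDerivAt_correlationPrimitive (θ u : ℝ) :
    HasDerivAt (correlationPrimitive θ) (sinSqCosSqPrimitive u * cos (u - θ)) u := by
  have hx := hasDerivAt_id' u
  have h := (((hx.mul (hx.sub_const θ).sin).add (hx.sub_const θ).cos).add
    (((hx.const_mul 5).sub_const θ).cos.div_const 40)).add
    (((hx.const_mul 3).add_const θ).cos.div_const 24) |>.div_const 8
  refine h.congr_deriv ?_
  rw [sinSqCosSqPrimitive, show 5 * u - θ = 4 * u + (u - θ) by ring,
    show 3 * u + θ = 4 * u - (u - θ) by ring, sin_add (4 * u), sin_sub (4 * u)]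
  ring

lemma correlationPrimitive_pi_div_two (θ : ℝ) :
    correlationPrimitive θ (π / 2) = (π / 2 * cos θ + 16 / 15 * sin θ) / 8 := by
  rw [correlationPrimitive, sin_pi_div_two_sub, cos_pi_div_two_sub,
    show 5 * (π / 2) - θ = π / 2 - θ + 2 * π by ring, cos_add_two_pi, cos_pi_div_two_sub,
    show 3 * (π / 2) + θ = θ + π / 2 + π by ring, cos_add_pi, cos_add_pi_div_two]
  ring

lemma correlationPrimitive_add_pi_div_two_add_sub_pi_div_two (θ : ℝ) :
    correlationPrimitive θ (θ + π / 2) + correlationPrimitive θ (θ - π / 2) = π / 8 := by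
  rw [correlationPrimitive, correlationPrimitive, add_sub_cancel_left, sub_sub_cancel_left,
    show 5 * (θ + π / 2) - θ = 4 * θ + π / 2 + 2 * π by ring,
    show 3 * (θ + π / 2) + θ = 4 * θ - π / 2 + 2 * π by ring,
    show 5 * (θ - π / 2) - θ = 4 * θ - π / 2 - 2 * π by ring,
    show 3 * (θ - π / 2) + θ = 4 * θ + π / 2 - 2 * π by ring]
  simp only [cos_add_two_pi, cos_sub_two_pi, cos_add_pi_div_two, cos_sub_pi_div_two,
    sin_pi_div_two, cos_pi_div_two, sin_neg, cos_neg]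
  ring

lemma integral_sinMoment_add_mul_cos {θ : ℝ} (hθ : θ ∈ Set.Icc 0 π) :
    ∫ ρ in -(π / 2)..π / 2, sinMoment (θ + ρ) * cos ρ = 4 * sin θ / 15 := by
  obtain ⟨hθ0, hθπ⟩ := hθ
  have hshift :=
    integral_comp_add_left (fun u => sinMoment u * cos (u - θ)) θ (a := -(π / 2)) (b := π / 2)
  simp only [add_sub_cancel_left, ← sub_eq_add_neg] at hshift
  have hint : ∀ a b, IntervalIntegrable (fun u => sinMoment u * cos (u - θ))
      MeasureTheory.volume a b := fun a b => Continuous.intervalIntegrable (by fun_prop) a b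
  have hlow : ∫ u in θ - π / 2..π / 2, sinMoment u * cos (u - θ)
      = correlationPrimitive θ (π / 2) - correlationPrimitive θ (θ - π / 2) := by
    refine integral_eq_sub_of_hasDerivAt (fun u hu => ?_) (hint _ _)
    rw [Set.uIcc_of_le (by linarith)] at hu
    refine (hasDerivAt_correlationPrimitive θ u).congr_deriv ?_
    rw [sinMoment_eq_of_mem_Icc ⟨by linarith [hu.1], hu.2⟩]
  have hhigh : ∫ u in π / 2..θ + π / 2, sinMoment u * cos (u - θ)
      = (π / 8 * sin (θ + π / 2 - θ) - correlationPrimitive θ (θ + π / 2))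
        - (π / 8 * sin (π / 2 - θ) - correlationPrimitive θ (π / 2)) := by
    refine integral_eq_sub_of_hasDerivAt
      (f := fun u => π / 8 * sin (u - θ) - correlationPrimitive θ u) (fun u hu => ?_) (hint _ _)
    rw [Set.uIcc_of_le (by linarith)] at hu
    refine (((hasDerivAt_id' u).sub_const θ).sin.const_mul (π / 8) |>.sub
      (hasDerivAt_correlationPrimitive θ u)).congr_deriv ?_
    rw [sinMoment_eq_of_mem_Icc_pi_div_two ⟨hu.1, by linarith [hu.2]⟩]
    ring
  rw [hshift, ← integral_add_adjacent_intervals (hint _ _) (hint _ _), hlow, hhigh,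
    add_sub_cancel_left, sin_pi_div_two, sin_pi_div_two_sub]
  linear_combination 2 * correlationPrimitive_pi_div_two θ
    - correlationPrimitive_add_pi_div_two_add_sub_pi_div_two θ

/-- For `θ ∈ [0, π]`,
`2∫_{-π/2}^{π/2} [∫_{-sin(θ+ρ)}^{sin(θ-ρ)} (2/π) t² √(1-t²) dt] (1/2) cos ρ dρ = 16 sin θ/(15π)`. -/
theorem third_integral_eval (θ : ℝ) (hθ : θ ∈ Set.Icc 0 π) :
    2 * ∫ ρ in (-(π / 2))..(π / 2),
      (∫ t in (-Real.sin (θ + ρ))..(Real.sin (θ - ρ)),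
          (2 / π) * t ^ 2 * Real.sqrt (1 - t ^ 2))
        * ((1 / 2) * Real.cos ρ)
      = 16 * Real.sin θ / (15 * π) := by
  have hinner : ∀ ρ, (∫ t in -sin (θ + ρ)..sin (θ - ρ), (2 / π) * t ^ 2 * √(1 - t ^ 2))
      * ((1 / 2) * cos ρ) = (sinMoment (θ + ρ) * cos ρ + sinMoment (θ - ρ) * cos ρ) / π := by
    intro ρ
    simp_rw [mul_assoc (2 / π), integral_const_mul]
    rw [integral_neg_eq_add_of_even (fun _ _ => Continuous.intervalIntegrable (by fun_prop) _ _)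
      (fun t => by simp only [neg_sq]), ← sinMoment, ← sinMoment]
    field_simp
  have hreflect : ∫ ρ in -(π / 2)..π / 2, sinMoment (θ - ρ) * cos ρ
      = ∫ ρ in -(π / 2)..π / 2, sinMoment (θ + ρ) * cos ρ := by
    simpa [sub_eq_add_neg] using
      integral_comp_neg (fun ρ => sinMoment (θ + ρ) * cos ρ) (a := -(π / 2)) (b := π / 2)
  simp_rw [hinner]
  rw [integral_div, integral_add (Continuous.intervalIntegrable (by fun_prop) _ _)
      (Continuous.intervalIntegrable (by fun_prop) _ _),
    hreflect, integral_sinMoment_add_mul_cos hθ]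
  field_simp
  ring
end

section
/- For every θ ∈ [0, π], (1/(2π)) ∫_{−π/2}^{π/2} [∫₀^{2π} ∫₀^1 r³ · 1_{−sin(θ+ρ) ≤ r sin(θ−β) ≤ sin(θ−ρ)} dr dβ] cos ρ dρ = (56 sin θ)/(45π). -/
/-!
Swap the order of integration. For fixed `r > 0` the condition reads
`sin (θ - β) ∈ [-B / r, A / r]` with `A = sin (θ - ρ)`, `B = sin (θ + ρ)`; over a full period in `β`
this set has measure `2 (arcsin (A / r) + arcsin (B / r))`, also when `A / r` or `B / r` leaves
`[-1, 1]`, because `arcsin` is clamped to `±π / 2` there. Integrating `r³ arcsin (c / r)` over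
`[0, 1]` gives `radialMoment c`, and `radialMoment (sin x) = x / 4 + sin 2x / 12 - sin 4x / 48` on
the principal branch `|x| ≤ π / 2`. The outer integral of `radialMoment (sin (θ ± ρ)) cos ρ` is then
elementary once it is split at `ρ = π / 2 - θ`, where `θ + ρ` leaves the principal branch.
-/

open Real intervalIntegral MeasureTheory Set

lemma ite_le_and_le_eq_indicator (a b x : ℝ) :
    (if a ≤ x ∧ x ≤ b then (1 : ℝ) else 0) = (Icc a b).indicator 1 x := by
  simp only [indicator_apply, mem_Icc, Pi.one_apply]

lemma intervalIntegral_indicator_Icc {l c d u : ℝ} (hlc : l ≤ c) (hcd : c ≤ d) (hdu : d ≤ u) :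
    ∫ x in l..u, (Icc c d).indicator (1 : ℝ → ℝ) x = d - c := by
  rw [integral_of_le (hlc.trans (hcd.trans hdu)), ← integral_Icc_eq_integral_Ioc,
    integral_indicator_one measurableSet_Icc, measureReal_restrict_apply measurableSet_Icc,
    inter_eq_left.2 (Icc_subset_Icc hlc hdu), volume_real_Icc_of_le hcd]

lemma integral_comp_sin_sub (f : ℝ → ℝ)
    (hf : IntervalIntegrable (fun x ↦ f (sin x)) volume 0 (2 * π)) (θ : ℝ) :
    ∫ β in (0 : ℝ)..(2 * π), f (sin (θ - β)) = 2 * ∫ x in -(π / 2)..(π / 2), f (sin x) := by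
  have hper : Function.Periodic (fun x ↦ f (sin x)) (2 * π) := fun x ↦ by simp only [sin_add_two_pi]
  have hint := hper.intervalIntegrable₀ two_pi_pos.ne' hf
  have hrefl : ∫ x in (π / 2)..(-(π / 2) + 2 * π), f (sin x)
      = ∫ x in -(π / 2)..(π / 2), f (sin x) := by
    have h := integral_comp_sub_left (fun x ↦ f (sin x)) π (a := -(π / 2)) (b := π / 2)
    simp only [sin_pi_sub] at h
    rw [h]
    congr 1 <;> ring
  calc ∫ β in (0 : ℝ)..(2 * π), f (sin (θ - β))
      = ∫ x in (θ - 2 * π)..(θ - 2 * π + 2 * π), f (sin x) := by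
        rw [integral_comp_sub_left (fun x ↦ f (sin x)), sub_zero, sub_add_cancel]
    _ = ∫ x in -(π / 2)..(-(π / 2) + 2 * π), f (sin x) := hper.intervalIntegral_add_eq _ _
    _ = 2 * ∫ x in -(π / 2)..(π / 2), f (sin x) := by
        rw [← integral_add_adjacent_intervals (hint _ (π / 2)) (hint _ _), hrefl, two_mul]

lemma intervalIntegral_indicator_Icc_comp_sin {a b : ℝ} (hab : -b ≤ a) :
    ∫ x in -(π / 2)..(π / 2), (Icc (-b) a).indicator (1 : ℝ → ℝ) (sin x) = arcsin a + arcsin b := by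
  have hπ : -(π / 2) ≤ π / 2 := by linarith [pi_pos]
  have hpre : EqOn (fun x ↦ (Icc (-b) a).indicator (1 : ℝ → ℝ) (sin x))
      ((Icc (arcsin (-b)) (arcsin a)).indicator 1) (Ioo (-(π / 2)) (π / 2)) := by
    intro x hx
    simp only [indicator_apply, Pi.one_apply, mem_Icc,
      arcsin_le_iff_le_sin' (Ioo_subset_Ico_self hx),
      le_arcsin_iff_sin_le' (Ioo_subset_Ioc_self hx)]
  rw [integral_congr_Ioo_of_le hπ hpre, intervalIntegral_indicator_Icc
      (neg_pi_div_two_le_arcsin _) (monotone_arcsin hab) (arcsin_le_pi_div_two _),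
    arcsin_neg, sub_neg_eq_add]

lemma integral_indicator_Icc_comp_sin_sub (θ : ℝ) {a b : ℝ} (hab : -b ≤ a) :
    ∫ β in (0 : ℝ)..(2 * π), (Icc (-b) a).indicator (1 : ℝ → ℝ) (sin (θ - β))
      = 2 * (arcsin a + arcsin b) := by
  rw [integral_comp_sin_sub _ ?_ θ, intervalIntegral_indicator_Icc_comp_sin hab]
  refine intervalIntegrable_const (c := (1 : ℝ)).mono_fun ?_ (ae_of_all _ fun x ↦ ?_)
  · exact ((measurable_one.indicator measurableSet_Icc).comp measurable_sin).aestronglyMeasurable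
  · simp only [indicator_apply]; split_ifs <;> simp

lemma intervalIntegral_integral_swap_of_bound {f : ℝ → ℝ → ℝ} {a b c d : ℝ} (hab : a ≤ b)
    (hcd : c ≤ d) (hf : Measurable (Function.uncurry f)) (C : ℝ)
    (hC : ∀ x ∈ Ioc a b, ∀ y ∈ Ioc c d, |f x y| ≤ C) :
    ∫ x in a..b, ∫ y in c..d, f x y = ∫ y in c..d, ∫ x in a..b, f x y := by
  simp only [integral_of_le hab, integral_of_le hcd]
  refine integral_integral_swap ?_
  rw [Measure.prod_restrict]
  refine IntegrableOn.of_bound ?_ hf.aestronglyMeasurable C ?_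
  · rw [Measure.prod_prod]
    exact ENNReal.mul_lt_top measure_Ioc_lt_top measure_Ioc_lt_top
  · rw [ae_restrict_iff' (measurableSet_Ioc.prod measurableSet_Ioc)]
    exact ae_of_all _ fun p hp ↦ hC _ hp.1 _ hp.2

noncomputable def radialMoment (c : ℝ) : ℝ :=
  arcsin c / 4 + c * (1 + 2 * c ^ 2) * √(1 - c ^ 2) / 12

noncomputable def radialMomentPrimitive (c r : ℝ) : ℝ :=
  r ^ 4 / 4 * arcsin (c / r) + c * (r ^ 2 + 2 * c ^ 2) * √(r ^ 2 - c ^ 2) / 12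

lemma hasDerivAt_radialMomentPrimitive {c r : ℝ} (hc : 0 < c) (hr : c < r) :
    HasDerivAt (radialMomentPrimitive c) (r ^ 3 * arcsin (c / r)) r := by
  have hr0 : 0 < r := hc.trans hr
  have hs2 : 0 < r ^ 2 - c ^ 2 := by nlinarith
  have hs := sq_sqrt hs2.le
  have hcr : c / r < 1 := (div_lt_one hr0).2 hr
  have hq : √(1 - (c / r) ^ 2) = √(r ^ 2 - c ^ 2) / r := by
    rw [show 1 - (c / r) ^ 2 = (r ^ 2 - c ^ 2) / r ^ 2 by field_simp, sqrt_div' _ (sq_nonneg r),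
      sqrt_sq hr0.le]
  have hdiv : HasDerivAt (fun r ↦ c / r) (-c / r ^ 2) r := by
    simpa [div_eq_mul_inv, neg_div] using (hasDerivAt_inv hr0.ne').const_mul c
  have harc := (hasDerivAt_arcsin (by linarith [div_pos hc hr0]) hcr.ne).comp r hdiv
  have hsqrt := ((hasDerivAt_pow 2 r).sub_const (c ^ 2)).sqrt hs2.ne'
  have hall := ((((hasDerivAt_pow 4 r).div_const 4).mul harc).add
    (((((hasDerivAt_pow 2 r).add_const (2 * c ^ 2)).const_mul c).mul hsqrt).div_const 12))
  refine hall.congr_deriv ?_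
  simp only [Function.comp_apply, hq]
  field_simp
  norm_num [hs]
  ring

lemma integral_pow_three_mul_arcsin_div_of_pos {c : ℝ} (hc0 : 0 < c) (hc1 : c ≤ 1) :
    ∫ r in (0 : ℝ)..1, r ^ 3 * arcsin (c / r) = radialMoment c := by
  have hlow : EqOn (fun r ↦ r ^ 3 * arcsin (c / r)) (fun r ↦ r ^ 3 * (π / 2)) (uIcc 0 c) := by
    intro r hr
    rw [uIcc_of_le hc0.le] at hr
    rcases hr.1.eq_or_lt with rfl | hr0
    · simp
    · simp only [arcsin_of_one_le ((one_le_div₀ hr0).2 hr.2)]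
  have hne : ∀ r ∈ Icc c 1, r ≠ 0 := fun r hr ↦ (hc0.trans_le hr.1).ne'
  have hcont : ContinuousOn (fun r ↦ r ^ 3 * arcsin (c / r)) (Icc c 1) := by
    fun_prop (disch := assumption)
  have hΦ : ContinuousOn (radialMomentPrimitive c) (Icc c 1) := by
    unfold radialMomentPrimitive
    fun_prop (disch := assumption)
  have hint_high : IntervalIntegrable (fun r ↦ r ^ 3 * arcsin (c / r)) volume c 1 :=
    hcont.intervalIntegrable_of_Icc hc1
  have hint_low : IntervalIntegrable (fun r ↦ r ^ 3 * arcsin (c / r)) volume 0 c :=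
    (intervalIntegrable_congr (hlow.mono uIoc_subset_uIcc)).2
      (by apply Continuous.intervalIntegrable; fun_prop)
  rw [← integral_add_adjacent_intervals hint_low hint_high, integral_congr hlow,
    integral_eq_sub_of_hasDerivAt_of_le hc1 hΦ
      (fun r hr ↦ hasDerivAt_radialMomentPrimitive hc0 hr.1) hint_high]
  simp [radialMomentPrimitive, radialMoment, div_self hc0.ne']
  ring

lemma radialMoment_neg (c : ℝ) : radialMoment (-c) = -radialMoment c := by
  simp only [radialMoment, arcsin_neg, neg_sq]
  ring

lemma integral_pow_three_mul_arcsin_div {c : ℝ} (hc : c ∈ Icc (-1) 1) :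
    ∫ r in (0 : ℝ)..1, r ^ 3 * arcsin (c / r) = radialMoment c := by
  rcases lt_trichotomy c 0 with hneg | rfl | hpos
  · have h := integral_pow_three_mul_arcsin_div_of_pos (neg_pos.2 hneg) (by linarith [hc.1])
    simp only [neg_div, arcsin_neg, mul_neg, intervalIntegral.integral_neg, radialMoment_neg,
      neg_inj] at h
    exact h
  · simp [radialMoment]
  · exact integral_pow_three_mul_arcsin_div_of_pos hpos hc.2

lemma intervalIntegrable_pow_three_mul_arcsin_div (c a b : ℝ) :
    IntervalIntegrable (fun r ↦ r ^ 3 * arcsin (c / r)) volume a b := by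
  refine IntervalIntegrable.continuousOn_mul ?_ (continuous_pow 3).continuousOn
  refine intervalIntegrable_const (c := π / 2).mono_fun ?_ (ae_of_all _ fun r ↦ ?_)
  · exact (continuous_arcsin.measurable.comp
      (measurable_const.div measurable_id)).aestronglyMeasurable
  · simp only [norm_eq_abs]
    rw [abs_of_pos pi_div_two_pos, abs_le]
    exact ⟨neg_pi_div_two_le_arcsin _, arcsin_le_pi_div_two _⟩

lemma indicator_Icc_one_mul {r : ℝ} (hr : 0 < r) (a b s : ℝ) :
    (Icc a b).indicator (1 : ℝ → ℝ) (r * s) = (Icc (a / r) (b / r)).indicator 1 s := by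
  simp only [indicator_apply, mem_Icc, Pi.one_apply, div_le_iff₀ hr, le_div_iff₀ hr, mul_comm s]

lemma integral_integral_pow_three_mul_indicator (θ : ℝ) {A B : ℝ} (hA : A ∈ Icc (-1) 1)
    (hB : B ∈ Icc (-1) 1) (hAB : -B ≤ A) :
    ∫ β in (0 : ℝ)..(2 * π), ∫ r in (0 : ℝ)..1, r ^ 3 * (Icc (-B) A).indicator 1 (r * sin (θ - β))
      = 2 * (radialMoment A + radialMoment B) := by
  have hmeas : Measurable (Function.uncurry fun β r : ℝ ↦
      r ^ 3 * (Icc (-B) A).indicator (1 : ℝ → ℝ) (r * sin (θ - β))) :=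
    (measurable_snd.pow_const 3).mul
      ((measurable_one.indicator measurableSet_Icc).comp (by fun_prop))
  have hbound : ∀ β ∈ Ioc 0 (2 * π), ∀ r ∈ Ioc (0 : ℝ) 1,
      |r ^ 3 * (Icc (-B) A).indicator (1 : ℝ → ℝ) (r * sin (θ - β))| ≤ 1 := by
    intro β _ r hr
    rw [abs_mul]
    refine mul_le_one₀ ?_ (abs_nonneg _) ?_
    · rw [abs_pow, abs_of_pos hr.1]; exact pow_le_one₀ hr.1.le hr.2
    · simp only [indicator_apply, Pi.one_apply]; split_ifs <;> simp
  have hslice : EqOn (fun r ↦ ∫ β in (0 : ℝ)..(2 * π),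
        r ^ 3 * (Icc (-B) A).indicator (1 : ℝ → ℝ) (r * sin (θ - β)))
      (fun r ↦ 2 * (r ^ 3 * arcsin (A / r)) + 2 * (r ^ 3 * arcsin (B / r))) (uIcc 0 1) := by
    intro r hr
    rw [uIcc_of_le zero_le_one] at hr
    rcases hr.1.eq_or_lt with rfl | hr0
    · simp
    · have hABr : -(B / r) ≤ A / r := by rw [← neg_div]; gcongr
      simp only [intervalIntegral.integral_const_mul, indicator_Icc_one_mul hr0, neg_div,
        integral_indicator_Icc_comp_sin_sub θ hABr]
      ring
  rw [intervalIntegral_integral_swap_of_bound two_pi_pos.le zero_le_one hmeas 1 hbound,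
    integral_congr hslice, intervalIntegral.integral_add, intervalIntegral.integral_const_mul,
    intervalIntegral.integral_const_mul, integral_pow_three_mul_arcsin_div hA,
    integral_pow_three_mul_arcsin_div hB, mul_add]
  all_goals exact (intervalIntegrable_pow_three_mul_arcsin_div _ _ _).const_mul 2

lemma continuous_radialMoment : Continuous radialMoment := by
  unfold radialMoment
  fun_prop

noncomputable def radialMomentSin (x : ℝ) : ℝ := x / 4 + sin (2 * x) / 12 - sin (4 * x) / 48

lemma radialMoment_sin {x : ℝ} (hx : x ∈ Icc (-(π / 2)) (π / 2)) :
    radialMoment (sin x) = radialMomentSin x := by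
  rw [radialMoment, radialMomentSin, arcsin_sin hx.1 hx.2, ← cos_sq',
    sqrt_sq (cos_nonneg_of_mem_Icc hx), show 4 * x = 2 * (2 * x) by ring, sin_two_mul (2 * x),
    sin_two_mul, cos_two_mul]
  linear_combination sin x * cos x / 6 * sin_sq_add_cos_sq x

lemma radialMoment_sin_of_pi_div_two_le {x : ℝ} (hx : x ∈ Icc (π / 2) (3 * π / 2)) :
    radialMoment (sin x) = π / 4 - radialMomentSin x := by
  rw [← sin_pi_sub, radialMoment_sin ⟨by linarith [hx.2], by linarith [hx.1]⟩, radialMomentSin,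
    radialMomentSin, show 2 * (π - x) = 2 * π - 2 * x by ring, sin_two_pi_sub,
    show 4 * (π - x) = 2 * π - 4 * x + 2 * π by ring, sin_add_two_pi, sin_two_pi_sub]
  ring

-- From `2 sin (k (θ + ρ)) cos ρ = sin (k θ + (k + 1) ρ) + sin (k θ + (k - 1) ρ)` for `k = 2, 4`.
noncomputable def outerPrimitive (θ ρ : ℝ) : ℝ :=
  ((θ + ρ) * sin ρ + cos ρ) / 4 - cos (2 * θ + 3 * ρ) / 72 - cos (2 * θ + ρ) / 24
    + cos (4 * θ + 5 * ρ) / 480 + cos (4 * θ + 3 * ρ) / 288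

lemma hasDerivAt_outerPrimitive (θ ρ : ℝ) :
    HasDerivAt (outerPrimitive θ) (radialMomentSin (θ + ρ) * cos ρ) ρ := by
  have hcos (a k : ℝ) : HasDerivAt (fun ρ ↦ cos (a + k * ρ)) (-sin (a + k * ρ) * k) ρ := by
    simpa using (((hasDerivAt_id ρ).const_mul k).const_add a).cos
  have hlin : HasDerivAt (fun ρ ↦ ((θ + ρ) * sin ρ + cos ρ) / 4) ((θ + ρ) * cos ρ / 4) ρ := by
    simpa using ((((hasDerivAt_id ρ).const_add θ).mul (hasDerivAt_sin ρ)).add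
      (hasDerivAt_cos ρ)).div_const 4
  have h := (((hlin.sub ((hcos (2 * θ) 3).div_const 72)).sub ((hcos (2 * θ) 1).div_const 24)).add
    ((hcos (4 * θ) 5).div_const 480)).add ((hcos (4 * θ) 3).div_const 288)
  simp only [one_mul] at h
  refine h.congr_deriv ?_
  rw [radialMomentSin, show 2 * θ + 3 * ρ = 2 * (θ + ρ) + ρ by ring,
    show 2 * θ + ρ = 2 * (θ + ρ) - ρ by ring, show 4 * θ + 5 * ρ = 4 * (θ + ρ) + ρ by ring,
    show 4 * θ + 3 * ρ = 4 * (θ + ρ) - ρ by ring, sin_add, sin_sub, sin_add, sin_sub]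
  ring

lemma outerPrimitive_endpoints (θ : ℝ) :
    2 * outerPrimitive θ (π / 2 - θ) - outerPrimitive θ (π / 2) - outerPrimitive θ (-(π / 2))
      = π / 4 * (cos θ - 1) + 28 * sin θ / 45 := by
  simp only [outerPrimitive]
  -- `ring_nf` writes every trigonometric argument as `±k θ + π * (m / 2)`.
  ring_nf
  rw [show π * (1 / 2) = π / 2 by ring, show π * (-1 / 2) = -(π / 2) by ring,
    show π * (3 / 2) = π / 2 + π by ring, show π * (-3 / 2) = π / 2 - 2 * π by ring,
    show π * (5 / 2) = π / 2 + 2 * π by ring, show π * (-5 / 2) = -(π / 2) - 2 * π by ring]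
  simp only [cos_add, sin_add, cos_sub, sin_sub, cos_neg, sin_neg, cos_pi_div_two, sin_pi_div_two,
    cos_pi, sin_pi, cos_two_pi, sin_two_pi]
  ring

lemma integral_radialMoment_sin_add_mul_cos {θ : ℝ} (hθ : θ ∈ Icc 0 π) :
    ∫ ρ in -(π / 2)..(π / 2), radialMoment (sin (θ + ρ)) * cos ρ = 28 * sin θ / 45 := by
  have hint (a b : ℝ) :
      IntervalIntegrable (fun ρ ↦ radialMoment (sin (θ + ρ)) * cos ρ) volume a b :=
    (by have := continuous_radialMoment; fun_prop : Continuous _).intervalIntegrable a b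
  have hderiv (a b : ℝ) : IntervalIntegrable (fun ρ ↦ radialMomentSin (θ + ρ) * cos ρ) volume a b :=
    (by unfold radialMomentSin; fun_prop : Continuous _).intervalIntegrable a b
  have hlow : ∫ ρ in -(π / 2)..(π / 2 - θ), radialMoment (sin (θ + ρ)) * cos ρ
      = outerPrimitive θ (π / 2 - θ) - outerPrimitive θ (-(π / 2)) := by
    rw [← integral_eq_sub_of_hasDerivAt (fun ρ _ ↦ hasDerivAt_outerPrimitive θ ρ) (hderiv _ _)]
    refine integral_congr fun ρ hρ ↦ ?_
    rw [uIcc_of_le (by linarith [hθ.2])] at hρ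
    have hx : θ + ρ ∈ Icc (-(π / 2)) (π / 2) := ⟨by linarith [hρ.1, hθ.1], by linarith [hρ.2]⟩
    rw [radialMoment_sin hx]
  have hhigh : ∫ ρ in (π / 2 - θ)..(π / 2), radialMoment (sin (θ + ρ)) * cos ρ
      = (π / 4 * sin (π / 2) - outerPrimitive θ (π / 2))
        - (π / 4 * sin (π / 2 - θ) - outerPrimitive θ (π / 2 - θ)) := by
    rw [integral_congr (g := fun ρ ↦ π / 4 * cos ρ - radialMomentSin (θ + ρ) * cos ρ) ?_,
      integral_eq_sub_of_hasDerivAt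
        (fun ρ _ ↦ ((hasDerivAt_sin ρ).const_mul (π / 4)).sub (hasDerivAt_outerPrimitive θ ρ))
        (((continuous_cos.intervalIntegrable _ _).const_mul _).sub (hderiv _ _))]
    · rfl
    intro ρ hρ
    rw [uIcc_of_le (by linarith [hθ.1])] at hρ
    have hx : θ + ρ ∈ Icc (π / 2) (3 * π / 2) := ⟨by linarith [hρ.1], by linarith [hρ.2, hθ.2]⟩
    simp only [radialMoment_sin_of_pi_div_two_le hx]
    ring
  rw [← integral_add_adjacent_intervals (hint _ (π / 2 - θ)) (hint _ _), hlow, hhigh,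
    sin_pi_div_two, sin_pi_div_two_sub]
  linear_combination outerPrimitive_endpoints θ

lemma integral_radialMoment_sin_sub_mul_cos (θ : ℝ) :
    ∫ ρ in -(π / 2)..(π / 2), radialMoment (sin (θ - ρ)) * cos ρ
      = ∫ ρ in -(π / 2)..(π / 2), radialMoment (sin (θ + ρ)) * cos ρ := by
  simpa [sub_eq_add_neg] using
    integral_comp_neg (fun ρ ↦ radialMoment (sin (θ + ρ)) * cos ρ) (a := -(π / 2)) (b := π / 2)

/-- For `θ ∈ [0, π]`,
`(1/(2π)) ∫_{-π/2}^{π/2} [∫₀^{2π} ∫₀^1 r³ 1_{-sin(θ+ρ) ≤ r sin(θ-β) ≤ sin(θ-ρ)} dr dβ] cos ρ dρ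
  = 56 sin θ / (45π)`. -/
theorem second_integral_eval (θ : ℝ) (hθ : θ ∈ Set.Icc 0 π) :
    (1 / (2 * π)) * ∫ ρ in (-(π / 2))..(π / 2),
      (∫ β in (0 : ℝ)..(2 * π), ∫ r in (0 : ℝ)..1,
        r ^ 3 * (if -Real.sin (θ + ρ) ≤ r * Real.sin (θ - β)
                    ∧ r * Real.sin (θ - β) ≤ Real.sin (θ - ρ)
                 then (1 : ℝ) else 0))
        * Real.cos ρ
      = 56 * Real.sin θ / (45 * π) := by
  have hslice : EqOn (fun ρ ↦ (∫ β in (0 : ℝ)..(2 * π), ∫ r in (0 : ℝ)..1,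
        r ^ 3 * (if -sin (θ + ρ) ≤ r * sin (θ - β) ∧ r * sin (θ - β) ≤ sin (θ - ρ)
          then (1 : ℝ) else 0)) * cos ρ)
      (fun ρ ↦ 2 * (radialMoment (sin (θ - ρ)) * cos ρ) + 2 * (radialMoment (sin (θ + ρ)) * cos ρ))
      (uIcc (-(π / 2)) (π / 2)) := by
    intro ρ hρ
    rw [uIcc_of_le (by linarith [pi_pos])] at hρ
    have hsum : 0 ≤ sin (θ - ρ) + sin (θ + ρ) := by
      rw [sin_sub, sin_add]
      nlinarith [mul_nonneg (sin_nonneg_of_nonneg_of_le_pi hθ.1 hθ.2) (cos_nonneg_of_mem_Icc hρ)]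
    simp only [ite_le_and_le_eq_indicator, integral_integral_pow_three_mul_indicator θ
      ⟨neg_one_le_sin (θ - ρ), sin_le_one _⟩ ⟨neg_one_le_sin (θ + ρ), sin_le_one _⟩ (by linarith)]
    ring
  have hint (f : ℝ → ℝ) (hf : Continuous f) : IntervalIntegrable
      (fun ρ ↦ 2 * (radialMoment (sin (f ρ)) * cos ρ)) volume (-(π / 2)) (π / 2) :=
    (by have := continuous_radialMoment; fun_prop : Continuous _).intervalIntegrable _ _
  rw [integral_congr hslice,
    intervalIntegral.integral_add (hint _ (by fun_prop)) (hint _ (by fun_prop)),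
    intervalIntegral.integral_const_mul, intervalIntegral.integral_const_mul,
    integral_radialMoment_sin_sub_mul_cos, integral_radialMoment_sin_add_mul_cos hθ]
  field_simp
  ring
end
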